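/- Let P : (0,∞) → ℝ be C¹ and nondecreasing, ρ̃ > 0, P̃ = P(ρ̃), and H_l(ρ) = ρ ∫_{ρ̃}^{ρ} s^{-2}|P(s)−P̃|^{l−1}(P(s)−P̃) ds for l ≥ 1. Then for every ρ > 0, ρ̃ · H_l(ρ) ≤ |P(ρ) − P̃|^{l−1} (P(ρ) − P̃) (ρ − ρ̃). -/

import Mathlib

/-!
Write `g s = |P s - P̃| ^ (l - 1) * (P s - P̃)`, which is nondecreasing in `s` because `P` is and
`x ↦ |x| ^ (l - 1) * x` is. Since `∫_ρ̃^ρ s⁻² ds = (ρ - ρ̃) / (ρ̃ ρ)`, the claim says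
`∫_ρ̃^ρ s⁻² (g s - g ρ) ds ≤ 0`, and the integrand has the right sign on either side of `ρ̃`.
-/

open MeasureTheory Set

lemma monotone_abs_rpow_mul_self {p : ℝ} (hp : -1 ≤ p) : Monotone fun x : ℝ => |x| ^ p * x := by
  refine monotone_of_odd_of_monotoneOn_nonneg (fun x => by simp only [abs_neg, mul_neg]) ?_
  intro a ha b hb hab
  rcases (mem_Ici.mp ha).eq_or_lt with rfl | ha
  · simpa using mul_nonneg (Real.rpow_nonneg (abs_nonneg b) p) (mem_Ici.mp hb)
  · have hb : 0 < b := ha.trans_le hab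
    simp only [abs_of_pos ha, abs_of_pos hb, ← Real.rpow_add_one ha.ne', ← Real.rpow_add_one hb.ne']
    exact Real.rpow_le_rpow ha.le hab (by linarith)

lemma integral_one_div_sq {a b : ℝ} (ha : 0 < a) (hb : 0 < b) :
    ∫ s in a..b, 1 / s ^ 2 = a⁻¹ - b⁻¹ := by
  have h0 : (0 : ℝ) ∉ uIcc a b := notMem_uIcc_of_lt ha hb
  simp_rw [one_div, ← zpow_natCast, ← zpow_neg]
  rw [integral_zpow (Or.inr ⟨by norm_num, h0⟩)]
  norm_num
  ring

lemma uIcc_subset_Ioi_zero {a b : ℝ} (ha : 0 < a) (hb : 0 < b) : uIcc a b ⊆ Ioi 0 :=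
  fun _ hs => (lt_min ha hb).trans_le hs.1

namespace MonotoneOn

variable {g : ℝ → ℝ} {a b : ℝ}

lemma intervalIntegrable_one_div_sq_mul (hg : MonotoneOn g (Ioi 0)) (ha : 0 < a) (hb : 0 < b) :
    IntervalIntegrable (fun s => 1 / s ^ 2 * g s) volume a b := by
  refine (hg.mono (uIcc_subset_Ioi_zero ha hb)).intervalIntegrable.continuousOn_mul ?_
  exact continuousOn_const.div (continuousOn_pow 2)
    fun s hs => pow_ne_zero 2 (uIcc_subset_Ioi_zero ha hb hs).ne'

lemma integral_one_div_sq_mul_sub_nonpos (hg : MonotoneOn g (Ioi 0)) (ha : 0 < a) (hb : 0 < b) :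
    ∫ s in a..b, 1 / s ^ 2 * (g s - g b) ≤ 0 := by
  rcases le_total a b with hab | hba
  · rw [intervalIntegral.integral_of_le hab]
    refine setIntegral_nonpos measurableSet_Ioc fun s hs => ?_
    exact mul_nonpos_of_nonneg_of_nonpos (by positivity)
      (sub_nonpos.mpr (hg (ha.trans hs.1) hb hs.2))
  · rw [intervalIntegral.integral_symm, neg_nonpos]
    refine intervalIntegral.integral_nonneg hba fun s hs => ?_
    exact mul_nonneg (by positivity) (sub_nonneg.mpr (hg hb (hb.trans_le hs.1) hs.1))

lemma mul_mul_integral_one_div_sq_mul_le (hg : MonotoneOn g (Ioi 0)) (ha : 0 < a) (hb : 0 < b) :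
    a * b * ∫ s in a..b, 1 / s ^ 2 * g s ≤ g b * (b - a) := by
  have hsplit : ∫ s in a..b, 1 / s ^ 2 * g s =
      (∫ s in a..b, 1 / s ^ 2 * (g s - g b)) + (a⁻¹ - b⁻¹) * g b := by
    have hsub : IntervalIntegrable (fun s => 1 / s ^ 2 * (g s - g b)) volume a b := by
      simpa only [sub_eq_add_neg] using (hg.add_const (-g b)).intervalIntegrable_one_div_sq_mul ha hb
    have hconst : IntervalIntegrable (fun s => 1 / s ^ 2 * g b) volume a b :=
      monotoneOn_const.intervalIntegrable_one_div_sq_mul ha hb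
    rw [← integral_one_div_sq ha hb, ← intervalIntegral.integral_mul_const,
      ← intervalIntegral.integral_add hsub hconst]
    congr 1
    ext s
    ring
  calc a * b * ∫ s in a..b, 1 / s ^ 2 * g s
      = a * b * (∫ s in a..b, 1 / s ^ 2 * (g s - g b)) + g b * (b - a) := by
        rw [hsplit]
        field_simp
    _ ≤ g b * (b - a) := by
        nlinarith [mul_pos ha hb, hg.integral_one_div_sq_mul_sub_nonpos ha hb]

end MonotoneOn

theorem stmt3_general (P : ℝ → ℝ) (l : ℝ) (hl : 1 ≤ l) (ρtil : ℝ) (hρtil : 0 < ρtil)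
    (hP_mono : MonotoneOn P (Set.Ioi 0))
    (H : ℝ → ℝ)
    (hH : ∀ ρ, H ρ =
      ρ * ∫ s in ρtil..ρ, (1 / s ^ 2) * (|P s - P ρtil| ^ (l - 1) * (P s - P ρtil))) :
    ∀ ρ ∈ Set.Ioi (0 : ℝ),
      ρtil * H ρ ≤ |P ρ - P ρtil| ^ (l - 1) * (P ρ - P ρtil) * (ρ - ρtil) := by
  intro ρ hρ
  have hg : MonotoneOn (fun s => |P s - P ρtil| ^ (l - 1) * (P s - P ρtil)) (Ioi 0) :=
    (monotone_abs_rpow_mul_self (by linarith)).comp_monotoneOn (hP_mono.add_const (-P ρtil))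
  rw [hH, ← mul_assoc]
  exact hg.mul_mul_integral_one_div_sq_mul_le hρtil hρ

/-- Pointwise bound for the potential energy:
`ρ̃ · H_l(ρ) ≤ |P(ρ) − P̃|^{l−1} (P(ρ) − P̃) (ρ − ρ̃)` for all `ρ > 0`. -/
theorem stmt3 (P : ℝ → ℝ) (l : ℝ) (hl : 1 ≤ l) (ρtil : ℝ) (hρtil : 0 < ρtil)
    (hP_diff : ∀ ρ ∈ Set.Ioi (0 : ℝ), DifferentiableAt ℝ P ρ)
    (hP_cont : ContinuousOn (deriv P) (Set.Ioi 0))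
    (hP_mono : MonotoneOn P (Set.Ioi 0))
    (H : ℝ → ℝ)
    (hH : ∀ ρ, H ρ =
      ρ * ∫ s in ρtil..ρ, (1 / s ^ 2) * (|P s - P ρtil| ^ (l - 1) * (P s - P ρtil))) :
    ∀ ρ ∈ Set.Ioi (0 : ℝ),
      ρtil * H ρ ≤ |P ρ - P ρtil| ^ (l - 1) * (P ρ - P ρtil) * (ρ - ρtil) :=
  stmt3_general P l hl ρtil hρtil hP_mono H hH
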